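/- Let M be a finitely generated abelian group, S an M-graded integral domain with fraction field 𝔽, and A ⊆ S any subset consisting of homogeneous elements. Then the subfield of 𝔽 generated by the degree-0 subfield 𝔽⁰ together with A equals 𝔽^{⟨deg A⟩}, the subfield of degree-0 elements with respect to the coarser grading by M/⟨deg A⟩, where ⟨deg A⟩ is the subgroup of M generated by degrees of elements of A. -/

import Mathlib

/-!
`Fcoarse 𝒜 ⟨deg A⟩` is a subfield containing `𝔽⁰` and `A`, which gives one inclusion.
Conversely, let `K ⊇ 𝔽⁰` be a subfield. If `K` contains one homogeneous ratio `u / v` of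
degree `d`, it contains every homogeneous ratio `f / g` of degree `d`, since `f / g` and `u / v`
differ by the degree-zero ratio `f v / (g u)`; so the degrees realised in `K` form a subgroup,
which contains `⟨deg A⟩` as soon as `A ⊆ K`. Finally a coarse ratio `f / g` equals
`(f / g') / (g / g')` for a nonzero homogeneous component `g'` of `g`, and the numerator and
denominator are sums of homogeneous ratios of degrees in `⟨deg A⟩`.
-/

variable {M : Type*} [AddCommGroup M] [DecidableEq M]
variable {S : Type*} [CommRing S] [IsDomain S]

def F0 (𝒜 : M → AddSubgroup S) : Set (FractionRing S) :=
  {x | ∃ (m : M) (f g : S), f ∈ 𝒜 m ∧ g ∈ 𝒜 m ∧ g ≠ 0 ∧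
    x = algebraMap S (FractionRing S) f / algebraMap S (FractionRing S) g}

def coarsePiece (𝒜 : M → AddSubgroup S) (M' : AddSubgroup M) (m : M) : AddSubgroup S :=
  ⨆ m' ∈ M', 𝒜 (m + m')

def Fcoarse (𝒜 : M → AddSubgroup S) (M' : AddSubgroup M) : Set (FractionRing S) :=
  {x | ∃ (m : M) (f g : S), f ∈ coarsePiece 𝒜 M' m ∧ g ∈ coarsePiece 𝒜 M' m ∧ g ≠ 0 ∧
    x = algebraMap S (FractionRing S) f / algebraMap S (FractionRing S) g}

section CoarsePiece

variable {ι R : Type*} [AddCommGroup ι] [CommRing R] {𝒜 : ι → AddSubgroup R}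
  {M' : AddSubgroup ι} {m : ι}

theorem mem_coarsePiece_of_mem {m' : ι} (hm' : m' ∈ M') {f : R} (hf : f ∈ 𝒜 (m + m')) :
    f ∈ coarsePiece 𝒜 M' m :=
  le_iSup₂ (f := fun m' (_ : m' ∈ M') => 𝒜 (m + m')) m' hm' hf

theorem le_coarsePiece : 𝒜 m ≤ coarsePiece 𝒜 M' m := fun _ hf =>
  mem_coarsePiece_of_mem M'.zero_mem (by rwa [add_zero])

@[elab_as_elim]
theorem coarsePiece_induction {C : R → Prop} {x : R} (hx : x ∈ coarsePiece 𝒜 M' m)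
    (mem : ∀ m' ∈ M', ∀ f ∈ 𝒜 (m + m'), C f) (zero : C 0)
    (add : ∀ a b, C a → C b → C (a + b)) : C x := by
  rw [coarsePiece, iSup_subtype'] at hx
  exact AddSubgroup.iSup_induction (C := C) _ hx (fun i f hf => mem i i.2 f hf) zero add

theorem exists_ne_zero_of_mem_coarsePiece {g : R} (hg : g ∈ coarsePiece 𝒜 M' m) (hg0 : g ≠ 0) :
    ∃ m' ∈ M', ∃ g' ∈ 𝒜 (m + m'), g' ≠ 0 := by
  by_contra! h
  exact hg0 (coarsePiece_induction hg h rfl fun a b ha hb => by rw [ha, hb, add_zero])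

theorem mul_mem_coarsePiece [SetLike.GradedMonoid 𝒜] {m₁ m₂ : ι} {x y : R}
    (hx : x ∈ coarsePiece 𝒜 M' m₁) (hy : y ∈ coarsePiece 𝒜 M' m₂) :
    x * y ∈ coarsePiece 𝒜 M' (m₁ + m₂) := by
  refine coarsePiece_induction hx (fun m₁' h₁ f hf => ?_) (by rw [zero_mul]; exact zero_mem _)
    fun a b ha hb => by rw [add_mul]; exact add_mem ha hb
  refine coarsePiece_induction hy (fun m₂' h₂ g hg => ?_) (by rw [mul_zero]; exact zero_mem _)
    fun a b ha hb => by rw [mul_add]; exact add_mem ha hb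
  refine mem_coarsePiece_of_mem (add_mem h₁ h₂) ?_
  rw [add_add_add_comm]
  exact SetLike.mul_mem_graded hf hg

theorem one_mem_coarsePiece [SetLike.GradedOne 𝒜] : (1 : R) ∈ coarsePiece 𝒜 M' 0 :=
  le_coarsePiece SetLike.GradedOne.one_mem

end CoarsePiece

section FractionRing

variable {ι R : Type*} [AddCommGroup ι] [CommRing R] [IsDomain R] {𝒜 : ι → AddSubgroup R}

local notation "φ" => algebraMap R (FractionRing R)

theorem F0_subset_Fcoarse {M' : AddSubgroup ι} : F0 𝒜 ⊆ Fcoarse 𝒜 M' := by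
  rintro _ ⟨m, f, g, hf, hg, hg0, rfl⟩
  exact ⟨m, f, g, le_coarsePiece hf, le_coarsePiece hg, hg0, rfl⟩

theorem algebraMap_mem_Fcoarse [SetLike.GradedOne 𝒜] {M' : AddSubgroup ι} {m : ι} {a : R}
    (ha : a ∈ 𝒜 m) (hm : m ∈ M') : φ a ∈ Fcoarse 𝒜 M' :=
  ⟨0, a, 1, mem_coarsePiece_of_mem hm (by rwa [zero_add]), one_mem_coarsePiece, one_ne_zero,
    by rw [map_one, div_one]⟩

variable [SetLike.GradedMonoid 𝒜]

variable (𝒜) in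
def coarseSubfield (M' : AddSubgroup ι) : Subfield (FractionRing R) where
  carrier := Fcoarse 𝒜 M'
  one_mem' := ⟨0, 1, 1, one_mem_coarsePiece, one_mem_coarsePiece, one_ne_zero, by simp⟩
  zero_mem' := ⟨0, 0, 1, zero_mem _, one_mem_coarsePiece, one_ne_zero, by simp⟩
  mul_mem' := by
    rintro _ _ ⟨m₁, f₁, g₁, hf₁, hg₁, hg₁0, rfl⟩ ⟨m₂, f₂, g₂, hf₂, hg₂, hg₂0, rfl⟩
    exact ⟨m₁ + m₂, f₁ * f₂, g₁ * g₂, mul_mem_coarsePiece hf₁ hf₂, mul_mem_coarsePiece hg₁ hg₂,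
      mul_ne_zero hg₁0 hg₂0, by simp only [map_mul, div_mul_div_comm]⟩
  add_mem' := by
    rintro _ _ ⟨m₁, f₁, g₁, hf₁, hg₁, hg₁0, rfl⟩ ⟨m₂, f₂, g₂, hf₂, hg₂, hg₂0, rfl⟩
    refine ⟨m₁ + m₂, f₁ * g₂ + g₁ * f₂, g₁ * g₂,
      add_mem (mul_mem_coarsePiece hf₁ hg₂) (mul_mem_coarsePiece hg₁ hf₂),
      mul_mem_coarsePiece hg₁ hg₂, mul_ne_zero hg₁0 hg₂0, ?_⟩
    rw [div_add_div _ _ (by simpa using hg₁0) (by simpa using hg₂0)]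
    simp only [map_add, map_mul]
  neg_mem' := by
    rintro _ ⟨m, f, g, hf, hg, hg0, rfl⟩
    exact ⟨m, -f, g, neg_mem hf, hg, hg0, by rw [map_neg, neg_div]⟩
  inv_mem' := by
    rintro _ ⟨m, f, g, hf, hg, hg0, rfl⟩
    obtain rfl | hf0 := eq_or_ne f 0
    · exact ⟨m, 0, g, zero_mem _, hg, hg0, by simp⟩
    · exact ⟨m, g, f, hg, hf, hf0, by rw [inv_div]⟩

variable (𝒜) in
def ratioDegrees (K : Subfield (FractionRing R)) : AddSubgroup ι where
  carrier := {d | ∃ (m n : ι) (u v : R), u ∈ 𝒜 m ∧ v ∈ 𝒜 n ∧ u ≠ 0 ∧ v ≠ 0 ∧ m - n = d ∧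
    φ u / φ v ∈ K}
  zero_mem' := ⟨0, 0, 1, 1, SetLike.GradedOne.one_mem, SetLike.GradedOne.one_mem, one_ne_zero,
    one_ne_zero, sub_self 0, by simp⟩
  add_mem' := by
    rintro _ _ ⟨m₁, n₁, u₁, v₁, hu₁, hv₁, hu₁0, hv₁0, rfl, h₁⟩
      ⟨m₂, n₂, u₂, v₂, hu₂, hv₂, hu₂0, hv₂0, rfl, h₂⟩
    refine ⟨m₁ + m₂, n₁ + n₂, u₁ * u₂, v₁ * v₂, SetLike.mul_mem_graded hu₁ hu₂,
      SetLike.mul_mem_graded hv₁ hv₂, mul_ne_zero hu₁0 hu₂0, mul_ne_zero hv₁0 hv₂0,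
      add_sub_add_comm _ _ _ _, ?_⟩
    rw [map_mul, map_mul, ← div_mul_div_comm]
    exact K.mul_mem h₁ h₂
  neg_mem' := by
    rintro _ ⟨m, n, u, v, hu, hv, hu0, hv0, rfl, h⟩
    exact ⟨n, m, v, u, hv, hu, hv0, hu0, (neg_sub m n).symm, by rw [← inv_div]; exact K.inv_mem h⟩

variable {K : Subfield (FractionRing R)}

theorem closure_degrees_le_ratioDegrees {A : Set R} (hA : φ '' A ⊆ K) :
    AddSubgroup.closure {m | ∃ a ∈ A, a ≠ 0 ∧ a ∈ 𝒜 m} ≤ ratioDegrees 𝒜 K :=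
  (AddSubgroup.closure_le _).mpr fun m ⟨a, ha, ha0, ham⟩ =>
    ⟨m, 0, a, 1, ham, SetLike.GradedOne.one_mem, ha0, one_ne_zero, sub_zero m,
      by simpa using hA ⟨a, ha, rfl⟩⟩

theorem div_mem_of_sub_mem_ratioDegrees (hK : F0 𝒜 ⊆ K) {m n : ι} {f g : R} (hf : f ∈ 𝒜 m)
    (hg : g ∈ 𝒜 n) (hg0 : g ≠ 0) (hmn : m - n ∈ ratioDegrees 𝒜 K) : φ f / φ g ∈ K := by
  obtain ⟨m', n', u, v, hu, hv, hu0, hv0, hdeg, huv⟩ := hmn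
  -- `f v / (g u)` has degree zero, and corrects `u / v` to `f / g`.
  have hfv : f * v ∈ 𝒜 (n + m') := by
    convert SetLike.mul_mem_graded hf hv using 2
    rw [sub_eq_sub_iff_add_eq_add] at hdeg
    rw [add_comm, hdeg]
  have hgu : g * u ∈ 𝒜 (n + m') := SetLike.mul_mem_graded hg hu
  have hcorr : φ (f * v) / φ (g * u) ∈ K := hK ⟨_, _, _, hfv, hgu, mul_ne_zero hg0 hu0, rfl⟩
  convert K.mul_mem hcorr huv using 1
  have : φ g ≠ 0 := by simpa using hg0
  have : φ u ≠ 0 := by simpa using hu0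
  have : φ v ≠ 0 := by simpa using hv0
  simp only [map_mul]
  field_simp

theorem div_mem_of_mem_coarsePiece (hK : F0 𝒜 ⊆ K) {M' : AddSubgroup ι}
    (hM' : M' ≤ ratioDegrees 𝒜 K) {m m' : ι} {f g : R} (hf : f ∈ coarsePiece 𝒜 M' m)
    (hm' : m' ∈ M') (hg : g ∈ 𝒜 (m + m')) (hg0 : g ≠ 0) : φ f / φ g ∈ K := by
  refine coarsePiece_induction hf (fun m'' hm'' f hf => ?_) (by simp)
    fun a b ha hb => by rw [map_add, add_div]; exact K.add_mem ha hb
  refine div_mem_of_sub_mem_ratioDegrees hK hf hg hg0 (hM' ?_)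
  rw [add_sub_add_left_eq_sub]
  exact sub_mem hm'' hm'

theorem Fcoarse_subset (hK : F0 𝒜 ⊆ K) {M' : AddSubgroup ι} (hM' : M' ≤ ratioDegrees 𝒜 K) :
    Fcoarse 𝒜 M' ⊆ K := by
  rintro _ ⟨m, f, g, hf, hg, hg0, rfl⟩
  obtain ⟨m', hm', g', hg', hg'0⟩ := exists_ne_zero_of_mem_coarsePiece hg hg0
  have hquot : φ f / φ g = (φ f / φ g') / (φ g / φ g') := by
    rw [div_div_div_cancel_right₀ (by simpa using hg'0)]
  rw [hquot]
  exact K.div_mem (div_mem_of_mem_coarsePiece hK hM' hf hm' hg' hg'0)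
    (div_mem_of_mem_coarsePiece hK hM' hg hm' hg' hg'0)

end FractionRing

theorem stmt1_general (𝒜 : M → AddSubgroup S) [GradedRing 𝒜]
    (A : Set S) (hA : ∀ a ∈ A, ∃ m, a ∈ 𝒜 m) :
    (Subfield.closure (F0 𝒜 ∪ (algebraMap S (FractionRing S)) '' A) :
        Set (FractionRing S)) =
      Fcoarse 𝒜 (AddSubgroup.closure {m : M | ∃ a ∈ A, a ≠ 0 ∧ a ∈ 𝒜 m}) := by
  set M' := AddSubgroup.closure {m : M | ∃ a ∈ A, a ≠ 0 ∧ a ∈ 𝒜 m}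
  refine subset_antisymm ?_ ?_
  · show Subfield.closure _ ≤ coarseSubfield 𝒜 M'
    refine Subfield.closure_le.mpr (Set.union_subset F0_subset_Fcoarse ?_)
    rintro _ ⟨a, ha, rfl⟩
    obtain rfl | ha0 := eq_or_ne a 0
    · rw [map_zero]
      exact (coarseSubfield 𝒜 M').zero_mem
    obtain ⟨m, ham⟩ := hA a ha
    exact algebraMap_mem_Fcoarse ham (AddSubgroup.subset_closure ⟨a, ha, ha0, ham⟩)
  · have hgen := Subfield.subset_closure (s := F0 𝒜 ∪ algebraMap S (FractionRing S) '' A)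
    exact Fcoarse_subset (Set.subset_union_left.trans hgen)
      (closure_degrees_le_ratioDegrees (Set.subset_union_right.trans hgen))

theorem stmt1 [AddGroup.FG M] (𝒜 : M → AddSubgroup S) [GradedRing 𝒜]
    (A : Set S) (hA : ∀ a ∈ A, ∃ m, a ∈ 𝒜 m) :
    (Subfield.closure (F0 𝒜 ∪ (algebraMap S (FractionRing S)) '' A) :
        Set (FractionRing S)) =
      Fcoarse 𝒜 (AddSubgroup.closure {m : M | ∃ a ∈ A, a ≠ 0 ∧ a ∈ 𝒜 m}) :=
  stmt1_general 𝒜 A hA
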